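/- arXiv:hep-th/0006018 — 3 statements merged into one kernel-verified Lean document; each statement's English description precedes it below -/
import Mathlib

section
/- Let η be a tensor with n indices, i.e. a function from n-tuples of indices in {1,…,D} to ℝ, which is gauge invariant, meaning that for all index values η_{1 2 3 ⋯ n} + η_{2 1 3 ⋯ n} + η_{2 3 1 ⋯ n} + ⋯ + η_{2 3 ⋯ 1 n} + η_{2 3 ⋯ n 1} = 0, where the first index is moved through all n positions while the remaining indices keep their relative order. Then the cyclic symmetrization τ_{1⋯n} = (1/n) Σ_{cyclic permutations π} η_{π(1)⋯π(n)} is cyclic gauge invariant, i.e. τ_{1 2 3 ⋯ n} + τ_{2 1 3 ⋯ n} + ⋯ + τ_{2 3 ⋯ 1 n} = 0, the same sum as above but omitting the last term, in which index 1 is in final position. -/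
lemma mod_two_cases (x c : ℕ) (hx : x < 2*c) : x % c = x ∨ x % c + c = x := by
  rcases Nat.lt_or_ge x c with h | h
  · left; exact Nat.mod_eq_of_lt h
  · right; rw [Nat.mod_eq_sub_mod h, Nat.mod_eq_of_lt (by omega)]; omega

lemma rot_pow_apply {n : ℕ} (m : ℕ) (j : Fin (n+1)) :
    ((finRotate (n+1)) ^ m) j = ⟨(j.1 + m) % (n+1), Nat.mod_lt _ (Nat.succ_pos n)⟩ := by
  induction m generalizing j with
  | zero => simp [Nat.mod_eq_of_lt j.2]
  | succ m ih =>
      rw [pow_succ, Equiv.Perm.mul_apply, finRotate_succ_apply, ih]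
      apply Fin.ext
      simp only [Fin.add_def, Fin.val_one', Nat.mod_add_mod]
      rw [Nat.add_right_comm, Nat.add_mod_mod, Nat.add_assoc]


/-- The tuple obtained from `a` by moving the first index value `a 0` into position `k`
among the remaining (ordered) index values `a 1, …, a (n-1)`. -/
def insertTuple {D n : ℕ} (a : Fin n → Fin D) (k : ℕ) : Fin n → Fin D :=
  fun j =>
    if j.1 < k then
      (if h : j.1 + 1 < n then a ⟨j.1 + 1, h⟩ else a j)
    else if j.1 = k then a ⟨0, Nat.lt_of_le_of_lt (Nat.zero_le _) j.2⟩
    else a j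

/-- Cyclic symmetrization: the average of `η` over the `n` cyclic rotations of its indices. -/
noncomputable def cycSym {D n : ℕ} (η : (Fin n → Fin D) → ℝ) : (Fin n → Fin D) → ℝ :=
  fun a => (1 / (n : ℝ)) * ∑ k ∈ Finset.range n, η (fun j => a (((finRotate n) ^ k) j))

set_option maxHeartbeats 2000000 in
/-- If `η` is gauge invariant (the sum of the `n` tensors obtained by inserting the first
index into each of the `n` possible positions vanishes), then its cyclic symmetrization
`τ = cycSym η` is cyclic gauge invariant (the analogous sum over the first `n-1`
insertion positions vanishes). -/
theorem stmt0 {D n : ℕ} (hn : 0 < n) (η : (Fin n → Fin D) → ℝ)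
    (hGI : ∀ a : Fin n → Fin D, ∑ k ∈ Finset.range n, η (insertTuple a k) = 0) :
    ∀ a : Fin n → Fin D, ∑ k ∈ Finset.range (n - 1), cycSym η (insertTuple a k) = 0 := by
  intro a
  rcases Nat.lt_or_ge n 2 with h2 | h2
  · obtain rfl : n = 1 := by omega
    simp
  obtain ⟨N, rfl⟩ : ∃ N, n = N + 2 := ⟨n - 2, by omega⟩
  set A : ℕ → Fin (N+2) → Fin D := fun m' j =>
    if j.1 = 0 then a ⟨0, by omega⟩
    else a ⟨(j.1 - 1 + m') % (N+1) + 1, by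
      have := Nat.mod_lt (j.1 - 1 + m') (y := N+1) (by omega); omega⟩ with hA
  have hval : ∀ k m : ℕ, k < N+1 → m < N+2 →
      (fun j => insertTuple a k ((finRotate (N+1+1) ^ m) j)) =
      insertTuple (A ((k + (N+1) - (k + (N+2) - m) % (N+2)) % (N+1))) ((k + (N+2) - m) % (N+2)) := by
    intro k m hk hm
    funext j
    rw [rot_pow_apply]
    have hj2 := j.2
    have hp := mod_two_cases (j.1 + m) (N+1+1) (by omega)
    set p := (j.1 + m) % (N+1+1) with hpdef
    have hplt : p < N+2 := Nat.mod_lt _ (by omega)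
    have h1 := mod_two_cases (k + (N+2) - m) (N+2) (by omega)
    set k' := (k + (N+2) - m) % (N+2) with hk'def
    have hk'lt : k' < N+2 := Nat.mod_lt _ (by omega)
    have h2 := mod_two_cases (k + (N+1) - k') (N+1) (by omega)
    set m' := (k + (N+1) - k') % (N+1) with hm'def
    have hm'lt : m' < N+1 := Nat.mod_lt _ (by omega)
    simp only [insertTuple, hA, Nat.add_sub_cancel, Fin.val_zero]
    have h3 := mod_two_cases (j.1 + m') (N+1) (by omega)
    set x1 := (j.1 + m') % (N+1) with hx1
    have hx1lt : x1 < N+1 := Nat.mod_lt _ (by omega)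
    have h4 := mod_two_cases (j.1 - 1 + m') (N+1) (by omega)
    set x2 := (j.1 - 1 + m') % (N+1) with hx2
    have hx2lt : x2 < N+1 := Nat.mod_lt _ (by omega)
    split_ifs <;>
      first
        | contradiction
        | (exfalso; omega)
        | (apply congrArg a; apply Fin.ext; simp; omega)
        | (apply congrArg a; apply Fin.ext; simp)
  have key : ∑ k ∈ Finset.range (N+1), ∑ m ∈ Finset.range (N+2),
      η (fun j => insertTuple a k ((finRotate (N+1+1) ^ m) j)) = 0 := by
    rw [← Finset.sum_product']
    have step : ∑ p ∈ Finset.range (N+1) ×ˢ Finset.range (N+2),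
        η (fun j => insertTuple a p.1 ((finRotate (N+1+1) ^ p.2) j))
        = ∑ p ∈ Finset.range (N+1) ×ˢ Finset.range (N+2), η (insertTuple (A p.1) p.2) := by
      refine Finset.sum_nbij'
        (fun p => (((p.1 + (N+1) - (p.1 + (N+2) - p.2) % (N+2)) % (N+1)),
                   (p.1 + (N+2) - p.2) % (N+2)))
        (fun p => (((p.2 + p.1) % (N+1)),
                   ((p.2 + p.1) % (N+1) + (N+2) - p.2) % (N+2)))
        ?_ ?_ ?_ ?_ ?_
      · intro p hp
        simp only [Finset.mem_product, Finset.mem_range] at hp ⊢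
        constructor
        · exact Nat.mod_lt _ (by omega)
        · exact Nat.mod_lt _ (by omega)
      · intro p hp
        simp only [Finset.mem_product, Finset.mem_range] at hp ⊢
        constructor
        · exact Nat.mod_lt _ (by omega)
        · exact Nat.mod_lt _ (by omega)
      · -- left inverse
        intro p hp
        simp only [Finset.mem_product, Finset.mem_range] at hp
        obtain ⟨hk, hm⟩ := hp
        have h1 := mod_two_cases (p.1 + (N+2) - p.2) (N+2) (by omega)
        set k' := (p.1 + (N+2) - p.2) % (N+2) with hk'
        have hk'lt : k' < N+2 := Nat.mod_lt _ (by omega)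
        have h2 := mod_two_cases (p.1 + (N+1) - k') (N+1) (by omega)
        set m' := (p.1 + (N+1) - k') % (N+1) with hm'
        have hm'lt : m' < N+1 := Nat.mod_lt _ (by omega)
        have h3 := mod_two_cases (k' + m') (N+1) (by omega)
        set kb := (k' + m') % (N+1) with hkb
        have hkblt : kb < N+1 := Nat.mod_lt _ (by omega)
        have h4 := mod_two_cases (kb + (N+2) - k') (N+2) (by omega)
        set mb := (kb + (N+2) - k') % (N+2) with hmb
        have hmblt : mb < N+2 := Nat.mod_lt _ (by omega)
        have h5 : kb = p.1 ∧ mb = p.2 := by omega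
        show (((k' + m') % (N+1)), ((k' + m') % (N+1) + (N+2) - k') % (N+2)) = p
        rw [← hkb, ← hmb, h5.1, h5.2]
      · -- right inverse
        intro p hp
        simp only [Finset.mem_product, Finset.mem_range] at hp
        obtain ⟨hm', hk'⟩ := hp
        have h1 := mod_two_cases (p.2 + p.1) (N+1) (by omega)
        set k := (p.2 + p.1) % (N+1) with hk
        have hklt : k < N+1 := Nat.mod_lt _ (by omega)
        have h2 := mod_two_cases (k + (N+2) - p.2) (N+2) (by omega)
        set m := (k + (N+2) - p.2) % (N+2) with hm
        have hmlt : m < N+2 := Nat.mod_lt _ (by omega)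
        have h3 := mod_two_cases (k + (N+2) - m) (N+2) (by omega)
        set k'b := (k + (N+2) - m) % (N+2) with hk'b
        have hk'blt : k'b < N+2 := Nat.mod_lt _ (by omega)
        have h4 := mod_two_cases (k + (N+1) - k'b) (N+1) (by omega)
        set m'b := (k + (N+1) - k'b) % (N+1) with hm'b
        have hm'blt : m'b < N+1 := Nat.mod_lt _ (by omega)
        have h5 : m'b = p.1 ∧ k'b = p.2 := by omega
        show ((k + (N+1) - (k + (N+2) - m) % (N+2)) % (N+1), (k + (N+2) - m) % (N+2)) = p
        rw [← hk'b, ← hm'b, h5.1, h5.2]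
      · intro p hp
        simp only [Finset.mem_product, Finset.mem_range] at hp
        rw [hval p.1 p.2 hp.1 hp.2]
    rw [step, Finset.sum_product]
    refine Finset.sum_eq_zero fun m' _ => ?_
    exact hGI (A m')
  have hc : ∑ k ∈ Finset.range (N + 2 - 1), cycSym η (insertTuple a k)
      = (1 / ((N+2 : ℕ) : ℝ)) * ∑ k ∈ Finset.range (N+1), ∑ m ∈ Finset.range (N+2),
        η (fun j => insertTuple a k ((finRotate (N+1+1) ^ m) j)) := by
    rw [Finset.mul_sum]
    rfl
  rw [hc, key, mul_zero]
end

section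
/- Let n be even and let τ be a cyclic gauge invariant tensor with n indices that is invariant under cyclic permutation of its indices. For a permutation σ of {1,…,n}, let J(σ) denote the number of pairs (σ(2i−1), σ(2i)), i = 1,…,n/2, with σ(2i−1) > σ(2i). Then Σ_{σ ∈ S_n} (−1)^{J(σ⁻¹)} τ_{σ(1) σ(2) ⋯ σ(n)} = 0. -/
theorem finRotate_lt_finRotate_iff {p : ℕ} {x y : Fin (p + 1)} (hxy : x ≠ y) :
    finRotate (p + 1) x < finRotate (p + 1) y ↔ (x < y ↔ x ≠ Fin.last p ∧ y ≠ Fin.last p) := by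
  simp only [finRotate_apply, Fin.lt_def, Fin.val_add_one, ne_eq, Fin.ext_iff] at hxy ⊢
  split_ifs <;> simp only [Fin.val_last] at * <;> omega

theorem neg_one_pow_card_filter_finRotate_lt {ι R : Type*} [Fintype ι] [DecidableEq ι] [CommRing R]
    {p : ℕ} (x y : ι → Fin (p + 1)) (hxy : ∀ i, x i ≠ y i) (i₀ : ι)
    (hlast : ∀ i, x i = Fin.last p ∨ y i = Fin.last p ↔ i = i₀) :
    (-1 : R) ^ (Finset.univ.filter fun i => finRotate (p + 1) (x i) < finRotate (p + 1) (y i)).card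
      = -(-1) ^ (Finset.univ.filter fun i => x i < y i).card := by
  have hflip : ∀ i, (if finRotate (p + 1) (x i) < finRotate (p + 1) (y i) then (-1 : R) else 1)
      = (if i = i₀ then -1 else 1) * (if x i < y i then -1 else 1) := by
    intro i
    have hrot := finRotate_lt_finRotate_iff (hxy i)
    rw [← not_or, hlast i] at hrot
    simp only [hrot]
    rcases eq_or_ne i i₀ with rfl | hi <;> by_cases hlt : x i < y i <;> simp [*]
  simp only [← Finset.prod_const, Finset.prod_filter, hflip, Finset.prod_mul_distrib,
    Finset.prod_ite_eq', Finset.mem_univ, if_true, neg_one_mul]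

-- The paper's `J(ρ)` in 0-based positions: pairs `(ρ (2i), ρ (2i+1))` in descending order.
def pairDescentCount {n m : ℕ} (hn : n = 2 * m) (ρ : Fin n → Fin n) : ℕ :=
  (Finset.univ.filter fun i : Fin m =>
    ρ ⟨2 * i.1 + 1, by omega⟩ < ρ ⟨2 * i.1, by omega⟩).card

theorem neg_one_pow_pairDescentCount_finRotate_mul {R : Type*} [CommRing R] {p m : ℕ}
    (hn : p + 1 = 2 * m) (ρ : Equiv.Perm (Fin (p + 1))) :
    (-1 : R) ^ pairDescentCount hn ⇑(finRotate (p + 1) * ρ) = -(-1) ^ pairDescentCount hn ρ := by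
  have hlt : (ρ⁻¹ (Fin.last p)).1 / 2 < m := by omega
  refine neg_one_pow_card_filter_finRotate_lt _ _ (fun i h => ?_) ⟨_, hlt⟩ fun i => ?_
  · have := Fin.val_eq_of_eq (ρ.injective h)
    simp at this
  · simp only [← Equiv.Perm.eq_inv_iff_eq (f := ρ), Fin.ext_iff]
    omega

theorem sum_eq_zero_of_comp_equiv_eq_neg {α G : Type*} [Fintype α] [AddCommGroup G]
    [IsAddTorsionFree G] (e : α ≃ α) (f : α → G) (hf : ∀ x, f (e x) = -f x) : ∑ x, f x = 0 := by
  rw [← self_eq_neg, ← Finset.sum_neg_distrib]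
  simp only [← hf]
  exact (e.sum_comp f).symm

/-- For an even `n = 2m`, a cyclically symmetric, cyclic gauge invariant tensor `τ`
satisfies `∑_{σ ∈ S_n} (-1)^{J(σ⁻¹)} τ_{σ(1) … σ(n)} = 0`, where `J(ρ)` counts the
pairs `(ρ(2i-1), ρ(2i))` that are descending. -/
theorem stmt1 {D n m : ℕ} (hn : n = 2 * m) (hm : 0 < m)
    (τ : (Fin n → Fin D) → ℝ)
    (hcyc : ∀ a : Fin n → Fin D, τ a = τ (fun j => a (finRotate n j)))
    (a : Fin n → Fin D) :
    ∑ σ : Equiv.Perm (Fin n),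
      (-1 : ℝ) ^ ((Finset.univ.filter (fun i : Fin m =>
            (σ⁻¹ ⟨2 * i.1 + 1, by have := i.2; omega⟩ : Fin n)
              < σ⁻¹ ⟨2 * i.1, by have := i.2; omega⟩)).card)
        * τ (fun k => a (σ k)) = 0 := by
  obtain ⟨p, rfl⟩ : ∃ p, n = p + 1 := ⟨n - 1, by omega⟩
  change ∑ σ : Equiv.Perm (Fin (p + 1)),
    (-1 : ℝ) ^ pairDescentCount hn ⇑σ⁻¹ * τ (fun k => a (σ k)) = 0
  refine sum_eq_zero_of_comp_equiv_eq_neg (Equiv.mulRight (finRotate (p + 1))⁻¹) _ fun σ => ?_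
  have hτ : τ (fun k => a ((σ * (finRotate (p + 1))⁻¹) k)) = τ (fun k => a (σ k)) := by
    rw [hcyc]
    simp only [Equiv.Perm.mul_apply, Equiv.Perm.coe_inv, Equiv.symm_apply_apply]
  rw [Equiv.coe_mulRight, mul_inv_rev, inv_inv, neg_one_pow_pairDescentCount_finRotate_mul, hτ,
    neg_mul]
end

section
/- Let τ be a cyclic gauge invariant tensor with n−2 indices (n ≥ 4) over index set {1,…,D}, invariant under cyclic permutations, and let A be any D×D real matrix. Define the tensor with n indices (before cyclic symmetrization): ρ_{a₁⋯aₙ} = A_{a₁a₂} τ_{a₃a₄⋯aₙ} − A_{a₁a₃} τ_{a₂a₄⋯aₙ}, and let σ_{a₁⋯aₙ} = Σ_{cyclic shifts of (a₁,…,aₙ)} ρ. Then σ is cyclic gauge invariant: σ_{1 2 3 ⋯ n} + σ_{2 1 3 ⋯ n} + σ_{2 3 1 ⋯ n} + ⋯ + σ_{2 3 ⋯ 1 n} = 0 for all index values. -/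
/-- `ρ_{a₁⋯aₙ} = A_{a₁a₂} τ_{a₃⋯aₙ} - A_{a₁a₃} τ_{a₂a₄⋯aₙ}` (0-indexed) for a tensor `τ`
with `m = n - 2` indices. -/
def rhoT {D m : ℕ} (A : Matrix (Fin D) (Fin D) ℝ) (τ : (Fin m → Fin D) → ℝ)
    (a : Fin (m + 2) → Fin D) : ℝ :=
  A (a 0) (a 1) * τ (fun j => a ⟨j.1 + 2, by have := j.2; omega⟩)
    - A (a 0) (a 2) * τ (fun j =>
        if j.1 = 0 then a 1 else a ⟨j.1 + 2, by have := j.2; omega⟩)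

/-- `σ` is the sum of `ρ` over the `n` cyclic rotations of its index tuple. -/
def sigmaT {D m : ℕ} (A : Matrix (Fin D) (Fin D) ℝ) (τ : (Fin m → Fin D) → ℝ)
    (a : Fin (m + 2) → Fin D) : ℝ :=
  ∑ k ∈ Finset.range (m + 2), rhoT A τ (fun j => a (((finRotate (m + 2)) ^ k) j))

namespace Finset

variable {M : Type*} [AddCommMonoid M] {f : ℕ → M} {n : ℕ}

theorem sum_range_add_of_periodic (hf : Function.Periodic f n) (c : ℕ) :
    ∑ i ∈ range n, f (i + c) = ∑ i ∈ range n, f i := by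
  induction c with
  | zero => rfl
  | succ c ih =>
    rcases n with _ | n
    · rfl
    rw [← ih, sum_range_succ_comm, sum_range_succ' (fun i => f (i + c)), add_comm, zero_add,
      ← hf c]
    simp only [Nat.add_right_comm _ 1 c, add_assoc, Nat.add_left_comm n c]

theorem sum_range_sub_of_periodic (hf : Function.Periodic f n) :
    ∑ i ∈ range n, f (n - i) = ∑ i ∈ range n, f i := by
  rw [← sum_range_reflect, ← sum_range_add_of_periodic hf 1]
  refine sum_congr rfl fun i hi => ?_
  rw [mem_range] at hi
  congr 1
  omega

end Finset

namespace List

variable {α M : Type*} [AddCommMonoid M]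

theorem insertIdx_eq_take_append_drop (x : α) :
    ∀ (k : ℕ) (l : List α), k ≤ l.length → l.insertIdx k x = l.take k ++ x :: l.drop k
  | 0, _, _ => rfl
  | _ + 1, [], h => by simp at h
  | k + 1, _ :: l, h => by
    simp only [insertIdx_succ_cons, take_succ_cons, drop_succ_cons, cons_append,
      insertIdx_eq_take_append_drop x k l (by simpa using h)]

theorem rotate_insertIdx_self (x : α) {k : ℕ} {l : List α} (hk : k ≤ l.length) :
    (l.insertIdx k x).rotate k = x :: l.rotate k := by
  have h := rotate_append_length_eq (l.take k) (x :: l.drop k)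
  rw [length_take_of_le hk] at h
  rw [insertIdx_eq_take_append_drop x k l hk, h, rotate_eq_drop_append_take hk, cons_append]

theorem insertIdx_eq_rotate_cons_rotate (x : α) {k : ℕ} {l : List α} (hk : k ≤ l.length) :
    l.insertIdx k x = (x :: l.rotate k).rotate (l.length + 1 - k) := by
  rw [← rotate_insertIdx_self x hk, rotate_rotate, Nat.add_sub_cancel' (by omega),
    ← length_insertIdx_of_le_length hk, rotate_length]

theorem rotate_periodic (l : List α) : Function.Periodic l.rotate l.length := fun n => by
  rw [← rotate_mod, Nat.add_mod_right, rotate_mod]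

theorem sum_sum_rotate_insertIdx (F : List α → M) (x : α) (l : List α) :
    ∑ k ∈ Finset.range l.length, ∑ r ∈ Finset.range (l.length + 1),
        F ((l.insertIdx k x).rotate r) =
      ∑ s ∈ Finset.range l.length, ∑ j ∈ Finset.range (l.length + 1),
        F ((l.rotate s).insertIdx j x) := by
  -- Both sides are sums of `Φ a b` over shifted and reflected periodic index ranges.
  set Φ : ℕ → ℕ → M := fun a b => F ((x :: l.rotate a).rotate b)
  have hΦ₁ (b : ℕ) : Function.Periodic (Φ · b) l.length := fun a => by
    simp only [Φ, l.rotate_periodic a]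
  have hΦ₂ (a : ℕ) : Function.Periodic (Φ a) (l.length + 1) := fun b => by
    simpa only [Φ, length_cons, length_rotate] using
      congrArg F ((x :: l.rotate a).rotate_periodic b)
  have lhs (k : ℕ) (hk : k ∈ Finset.range l.length) :
      ∑ r ∈ Finset.range (l.length + 1), F ((l.insertIdx k x).rotate r) =
        ∑ r ∈ Finset.range (l.length + 1), Φ k r := by
    have hk : k ≤ l.length := (Finset.mem_range.1 hk).le
    have hper : Function.Periodic (fun r => F ((l.insertIdx k x).rotate r)) (l.length + 1) := by
      intro r
      simpa only [length_insertIdx_of_le_length hk] using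
        congrArg F ((l.insertIdx k x).rotate_periodic r)
    rw [← Finset.sum_range_add_of_periodic hper k]
    simp only [Φ, add_comm _ k, ← rotate_rotate, rotate_insertIdx_self x hk]
  have rhs (s j : ℕ) (hj : j ∈ Finset.range (l.length + 1)) :
      F ((l.rotate s).insertIdx j x) = Φ (s + j) (l.length + 1 - j) := by
    have hj : j ≤ (l.rotate s).length := by simpa [Nat.lt_succ_iff] using hj
    rw [insertIdx_eq_rotate_cons_rotate x hj, rotate_rotate, length_rotate]
  rw [Finset.sum_congr rfl lhs]
  simp only [fun s => Finset.sum_congr rfl (rhs s)]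
  conv_rhs => rw [Finset.sum_comm]
  simp only [Finset.sum_range_add_of_periodic (hΦ₁ _)]
  conv_rhs => rw [Finset.sum_comm]
  simp only [Finset.sum_range_sub_of_periodic (hΦ₂ _)]

end List

section ListTensors

variable {α R : Type*} [CommRing R]

def rhoList (A : Matrix α α R) (T : List α → R) : List α → R
  | x :: y :: z :: t => A x y * T (z :: t) - A x z * T (y :: t)
  | _ => 0

structure IsCyclicGaugeInvariant (p : ℕ) (T : List α → R) : Prop where
  rotate_one : ∀ l : List α, l.length = p + 2 → T (l.rotate 1) = T l
  sum_insertIdx : ∀ (x : α) (l : List α), l.length = p + 1 →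
    ∑ k ∈ Finset.range (p + 1), T (l.insertIdx k x) = 0

variable {p : ℕ} {T : List α → R}

theorem IsCyclicGaugeInvariant.sum_insertIdx_succ (hT : IsCyclicGaugeInvariant p T) (x : α)
    {l : List α} (hl : l.length = p + 1) :
    ∑ k ∈ Finset.range (p + 1), T (l.insertIdx (k + 1) x) = 0 := by
  have hlast : T (l.insertIdx (p + 1) x) = T (l.insertIdx 0 x) := by
    rw [List.insertIdx_zero, ← hl, List.insertIdx_length_self]
    simpa only [List.rotate_cons_succ, List.rotate_zero] using
      hT.rotate_one (x :: l) (by simp [hl])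
  have h := Finset.sum_range_succ' (fun k => T (l.insertIdx k x)) (p + 1)
  rw [Finset.sum_range_succ, hT.sum_insertIdx x l hl, hlast, zero_add] at h
  exact add_eq_right.1 h.symm

theorem IsCyclicGaugeInvariant.sum_rhoList_insertIdx (hT : IsCyclicGaugeInvariant p T)
    (A : Matrix α α R) (x u₀ u₁ u₂ : α) {v : List α} (hv : v.length = p) :
    ∑ j ∈ Finset.range (p + 4), rhoList A T ((u₀ :: u₁ :: u₂ :: v).insertIdx j x) =
      A x u₀ * T (u₁ :: u₂ :: v) - A x u₁ * T (u₀ :: u₂ :: v) := by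
  have hrest (j : ℕ) : rhoList A T ((u₀ :: u₁ :: u₂ :: v).insertIdx (j + 3) x) =
      A u₀ u₁ * T ((u₂ :: v).insertIdx (j + 1) x) - A u₀ u₂ * T ((u₁ :: v).insertIdx (j + 1) x) :=
    rfl
  simp only [Finset.sum_range_succ' _ (p + 3), Finset.sum_range_succ' _ (p + 2),
    Finset.sum_range_succ' _ (p + 1), hrest, Finset.sum_sub_distrib, ← Finset.mul_sum,
    hT.sum_insertIdx_succ x (l := u₂ :: v) (by simp [hv]),
    hT.sum_insertIdx_succ x (l := u₁ :: v) (by simp [hv])]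
  simp only [List.insertIdx_succ_cons, List.insertIdx_zero, rhoList]
  ring

theorem IsCyclicGaugeInvariant.sum_sum_rhoList_insertIdx_rotate
    (hT : IsCyclicGaugeInvariant p T) (A : Matrix α α R) (x : α) {l : List α}
    (hl : l.length = p + 3) :
    ∑ s ∈ Finset.range (p + 3), ∑ j ∈ Finset.range (p + 4),
      rhoList A T ((l.rotate s).insertIdx j x) = 0 := by
  set G : ℕ → R := fun s => A x ((l.rotate s).headD x) * T (l.rotate s).tail
  have hstep (s : ℕ) : ∑ j ∈ Finset.range (p + 4), rhoList A T ((l.rotate s).insertIdx j x) =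
      G s - G (s + 1) := by
    have hlen : (l.rotate s).length = p + 3 := by rw [List.length_rotate, hl]
    obtain ⟨u₀, u₁, u₂, v, hs⟩ : ∃ u₀ u₁ u₂ v, l.rotate s = u₀ :: u₁ :: u₂ :: v := by
      match l.rotate s, hlen with
      | u₀ :: u₁ :: u₂ :: v, _ => exact ⟨u₀, u₁, u₂, v, rfl⟩
    have hv : v.length = p := by simpa [hs] using hlen
    have hs' : l.rotate (s + 1) = (u₁ :: u₂ :: v) ++ [u₀] := by
      rw [← List.rotate_rotate, hs, List.rotate_cons_succ, List.rotate_zero]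
    have hcyc : T (u₂ :: (v ++ [u₀])) = T (u₀ :: u₂ :: v) := by
      simpa only [List.rotate_cons_succ, List.rotate_zero, List.cons_append] using
        hT.rotate_one (u₀ :: u₂ :: v) (by simp [hv])
    simp only [G, hs, hs', hT.sum_rhoList_insertIdx A x u₀ u₁ u₂ hv, List.headD_cons,
      List.tail_cons, List.cons_append, hcyc]
  have hperiod : G (p + 3) = G 0 := by simp only [G, ← hl, List.rotate_length, List.rotate_zero]
  rw [Finset.sum_congr rfl fun s _ => hstep s, Finset.sum_range_sub', hperiod, sub_self]

end ListTensors

section Tuples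

variable {α : Type*}

theorem List.exists_ofFn_eq {l : List α} {q : ℕ} (h : l.length = q) :
    ∃ c : Fin q → α, List.ofFn c = l := by
  subst h
  exact ⟨_, List.ofFn_getElem⟩

theorem val_finRotate_pow_apply {n : ℕ} (k : ℕ) (j : Fin n) :
    ((finRotate n ^ k) j : ℕ) = (j + k) % n := by
  induction k generalizing j with
  | zero => simp [Nat.mod_eq_of_lt j.2]
  | succ k ih =>
    rcases n with _ | n
    · exact j.elim0
    rw [pow_succ, Equiv.Perm.mul_apply, ih, finRotate_apply, Fin.val_add, Fin.val_one',
      Nat.mod_add_mod, Nat.add_right_comm, Nat.add_mod_mod, Nat.add_assoc]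

theorem List.ofFn_comp_finRotate_pow {n : ℕ} (b : Fin n → α) (k : ℕ) :
    List.ofFn (fun j => b ((finRotate n ^ k) j)) = (List.ofFn b).rotate k := by
  refine List.ext_getElem (by simp) fun i h₁ h₂ => ?_
  simp only [List.getElem_rotate, List.getElem_ofFn, List.length_ofFn]
  congr 1
  ext
  rw [val_finRotate_pow_apply]

variable {R : Type*} [Zero R]

noncomputable def tauList {m : ℕ} (τ : (Fin m → α) → R) (l : List α) : R :=
  if h : l.length = m then τ (fun j => l[j.cast h.symm]) else 0

theorem tauList_ofFn {m : ℕ} (τ : (Fin m → α) → R) (c : Fin m → α) :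
    tauList τ (List.ofFn c) = τ c := by
  simp [tauList]

end Tuples

section Tensors

variable {D : ℕ}

theorem List.ofFn_insertTuple {q : ℕ} (a : Fin (q + 1) → Fin D) {k : ℕ} (hk : k ≤ q) :
    List.ofFn (insertTuple a k) = (List.ofFn fun i : Fin q => a i.succ).insertIdx k (a 0) := by
  refine List.ext_getElem (by simp [List.length_insertIdx_of_le_length, hk]) fun i h₁ h₂ => ?_
  simp only [List.getElem_ofFn, List.getElem_insertIdx, insertTuple]
  split_ifs <;> first | rfl | omega | (congr 1; ext; simp only [Fin.val_succ]; omega)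

theorem rhoT_eq_rhoList {p : ℕ} (A : Matrix (Fin D) (Fin D) ℝ) (τ : (Fin (p + 2) → Fin D) → ℝ)
    (a : Fin (p + 4) → Fin D) :
    rhoT A τ a = rhoList A (tauList τ) (List.ofFn a) := by
  set w := List.ofFn fun j : Fin (p + 1) => a ⟨j + 3, by omega⟩
  have h₀ : List.ofFn a = a 0 :: a 1 :: a 2 :: w := by
    rw [List.ofFn_succ, List.ofFn_succ, List.ofFn_succ]; rfl
  have h₁ : List.ofFn (fun j : Fin (p + 2) => a ⟨j + 2, by omega⟩) = a 2 :: w := by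
    rw [List.ofFn_succ]; rfl
  have h₂ : List.ofFn (fun j : Fin (p + 2) => if j.1 = 0 then a 1 else a ⟨j + 2, by omega⟩) =
      a 1 :: w := by
    rw [List.ofFn_succ]
    simp only [Fin.val_zero, Fin.val_succ, Nat.add_one_ne_zero, if_true, if_false]
    rfl
  rw [rhoT, ← tauList_ofFn τ, ← tauList_ofFn τ, h₀, h₁, h₂]
  rfl

theorem sigmaT_eq_sum_rhoList {p : ℕ} (A : Matrix (Fin D) (Fin D) ℝ)
    (τ : (Fin (p + 2) → Fin D) → ℝ) (a : Fin (p + 4) → Fin D) :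
    sigmaT A τ a = ∑ r ∈ Finset.range (p + 4), rhoList A (tauList τ) ((List.ofFn a).rotate r) := by
  simp only [sigmaT, rhoT_eq_rhoList, List.ofFn_comp_finRotate_pow]

theorem isCyclicGaugeInvariant_tauList {p : ℕ} {τ : (Fin (p + 2) → Fin D) → ℝ}
    (hcyc : ∀ b : Fin (p + 2) → Fin D, τ b = τ (fun j => b (finRotate (p + 2) j)))
    (hCGI : ∀ b : Fin (p + 2) → Fin D,
      ∑ k ∈ Finset.range (p + 1), τ (insertTuple b k) = 0) :
    IsCyclicGaugeInvariant p (tauList τ) where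
  rotate_one l hl := by
    obtain ⟨c, rfl⟩ := List.exists_ofFn_eq hl
    simpa only [← List.ofFn_comp_finRotate_pow c 1, pow_one, tauList_ofFn] using (hcyc c).symm
  sum_insertIdx x l hl := by
    obtain ⟨c, rfl⟩ := List.exists_ofFn_eq hl
    rw [← hCGI (Fin.cons x c)]
    refine Finset.sum_congr rfl fun k hk => ?_
    rw [← tauList_ofFn τ, List.ofFn_insertTuple _ (Finset.mem_range.1 hk).le]
    simp only [Fin.cons_zero, Fin.cons_succ]

end Tensors

/-- If `τ` is a cyclically symmetric, cyclic gauge invariant tensor with `m = n - 2 ≥ 2`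
indices and `A` is any matrix, then the cyclic symmetrization `σ` of
`ρ_{a₁⋯aₙ} = A_{a₁a₂} τ_{a₃⋯aₙ} - A_{a₁a₃} τ_{a₂a₄⋯aₙ}` is cyclic gauge invariant. -/
theorem stmt11 {D m : ℕ} (hm : 2 ≤ m) (A : Matrix (Fin D) (Fin D) ℝ)
    (τ : (Fin m → Fin D) → ℝ)
    (hcyc : ∀ b : Fin m → Fin D, τ b = τ (fun j => b (finRotate m j)))
    (hCGI : ∀ b : Fin m → Fin D, ∑ k ∈ Finset.range (m - 1), τ (insertTuple b k) = 0) :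
    ∀ a : Fin (m + 2) → Fin D,
      ∑ k ∈ Finset.range (m + 2 - 1), sigmaT A τ (insertTuple a k) = 0 := by
  obtain ⟨p, rfl⟩ := Nat.exists_eq_add_of_le' hm
  intro a
  set l := List.ofFn fun i : Fin (p + 3) => a i.succ
  have hl : l.length = p + 3 := List.length_ofFn
  calc ∑ k ∈ Finset.range (p + 3), sigmaT A τ (insertTuple a k)
      = ∑ k ∈ Finset.range l.length, ∑ r ∈ Finset.range (l.length + 1),
          rhoList A (tauList τ) ((l.insertIdx k (a 0)).rotate r) := by
        rw [hl]
        refine Finset.sum_congr rfl fun k hk => ?_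
        rw [sigmaT_eq_sum_rhoList, List.ofFn_insertTuple a (Finset.mem_range.1 hk).le]
    _ = ∑ s ∈ Finset.range l.length, ∑ j ∈ Finset.range (l.length + 1),
          rhoList A (tauList τ) ((l.rotate s).insertIdx j (a 0)) :=
        List.sum_sum_rotate_insertIdx _ _ _
    _ = 0 := by
        rw [hl]
        exact (isCyclicGaugeInvariant_tauList hcyc hCGI).sum_sum_rhoList_insertIdx_rotate
          A (a 0) hl
end
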